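/- In a finite orthomodular poset with connectives x ⊙ y := Min U(x, y') ∧ y and x → y := x' ∨ Max L(x, y), for all elements p, q we have p ≤₁ q → (p ⊙ q), i.e., for every element r of the set q → (p ⊙ q) we have p ≤ r. In fact q → (p ⊙ q) = Min U(p, q'). -/

import Mathlib

section
variable (A : Type*)

/-- Set of minimal upper bounds. -/
def MinU [PartialOrder A] (S : Set A) : Set A := {a | Minimal (· ∈ upperBounds S) a}

/-- Set of maximal lower bounds. -/
def MaxL [PartialOrder A] (S : Set A) : Set A := {a | Maximal (· ∈ lowerBounds S) a}

/-- An orthomodular poset: a bounded poset with an antitone involution that is a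
complementation, such that orthogonal elements have a join and the orthomodular law holds. -/
structure OMP [PartialOrder A] [BoundedOrder A] where
  compl : A → A
  compl_antitone : ∀ a b : A, a ≤ b → compl b ≤ compl a
  compl_involutive : ∀ a : A, compl (compl a) = a
  sup_compl : ∀ a : A, IsLUB {a, compl a} ⊤
  inf_compl : ∀ a : A, IsGLB {a, compl a} ⊥
  ortho_sup : ∀ a b : A, a ≤ compl b → ∃ c, IsLUB {a, b} c
  oml : ∀ a b m : A, a ≤ b → IsGLB {b, compl a} m → IsLUB {a, m} b

end

section
variable {A : Type*} [PartialOrder A] [BoundedOrder A]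

/-- The inexact conjunction `a ⊙ b := Min U(a, b') ∧ b` (a set of elements). -/
def odot (M : OMP A) (a b : A) : Set A :=
  {x | ∃ m ∈ MinU A {a, M.compl b}, IsGLB {m, b} x}

/-- The inexact implication `a → b := a' ∨ Max L(a, b)` (a set of elements). -/
def arrow (M : OMP A) (a b : A) : Set A :=
  {x | ∃ m ∈ MaxL A {a, b}, IsLUB {M.compl a, m} x}

/-- Extension of `⊙` to nonempty subsets. -/
def odotS (M : OMP A) (B C : Set A) : Set A := ⋃ b ∈ B, ⋃ c ∈ C, odot M b c

/-- Extension of `→` to nonempty subsets. -/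
def arrowS (M : OMP A) (B C : Set A) : Set A := ⋃ b ∈ B, ⋃ c ∈ C, arrow M b c

/-- `B ≤₁ C`: every element of `B` is below some element of `C`. -/
def le1 (B C : Set A) : Prop := ∀ b ∈ B, ∃ c ∈ C, b ≤ c

/-- `B ≤₂ C`: every element of `C` is above some element of `B`. -/
def le2 (B C : Set A) : Prop := ∀ c ∈ C, ∃ b ∈ B, b ≤ c

end

/-! Every `x ∈ p ⊙ q` lies below `q`, so `Max L(q, x) = {x}` and `q → x = q' ∨ x`. For
`x = m ∧ q` with `m ∈ Min U(p, q')` we have `q' ≤ m`, and orthomodularity gives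
`q' ∨ (m ∧ q) = m`. Conversely every `m ∈ Min U(p, q')` arises this way: `m ∧ q` exists, being
the complement of the orthogonal join `m' ∨ q'`. -/

namespace OMP

variable {A : Type*} [PartialOrder A] [BoundedOrder A] (M : OMP A)

theorem compl_le_comm {a b : A} : M.compl a ≤ b ↔ M.compl b ≤ a := by
  constructor <;> intro h <;> simpa only [M.compl_involutive] using M.compl_antitone _ _ h

theorem le_compl_comm {a b : A} : a ≤ M.compl b ↔ b ≤ M.compl a := by
  constructor <;> intro h <;> simpa only [M.compl_involutive] using M.compl_antitone _ _ h

theorem isGLB_compl_of_isLUB {a b c : A} (h : IsLUB {M.compl a, M.compl b} c) :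
    IsGLB {a, b} (M.compl c) := by
  refine ⟨?_, fun z hz => (M.le_compl_comm).2 (h.2 ?_)⟩
  · rintro y (rfl | rfl) <;> exact (M.compl_le_comm).2 (h.1 (by simp))
  · rintro y (rfl | rfl) <;> exact M.compl_antitone _ _ (hz (by simp))

theorem exists_isGLB_of_compl_le {a b : A} (h : M.compl a ≤ b) : ∃ x, IsGLB {b, a} x := by
  obtain ⟨c, hc⟩ := M.ortho_sup (M.compl b) (M.compl a) (M.compl_antitone _ _ h)
  exact ⟨M.compl c, M.isGLB_compl_of_isLUB hc⟩

theorem isLUB_compl_of_isGLB {a b x : A} (h : M.compl a ≤ b) (hx : IsGLB {b, a} x) :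
    IsLUB {M.compl a, x} b :=
  M.oml _ _ _ h (by rwa [M.compl_involutive])

end OMP

theorem maxL_pair_of_le {A : Type*} [PartialOrder A] {a b : A} (h : b ≤ a) :
    MaxL A {a, b} = {b} := by
  have hb : ∀ x, x ∈ lowerBounds {a, b} ↔ x ≤ b := fun x => by
    simpa [lowerBounds_insert] using fun hx => hx.trans h
  ext x
  change Maximal (· ∈ lowerBounds {a, b}) x ↔ x = b
  simp_rw [hb]
  exact maximal_le_iff

section

variable {A : Type*} [PartialOrder A] [BoundedOrder A] (M : OMP A)

theorem arrow_eq_singleton {a m x : A} (h : M.compl a ≤ m) (hx : IsGLB {m, a} x) :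
    arrow M a x = {m} := by
  have hxa : x ≤ a := hx.1 (by simp)
  ext r
  simp only [arrow, maxL_pair_of_le hxa, Set.mem_singleton_iff, exists_eq_left,
    Set.mem_ofPred_eq]
  have hm := M.isLUB_compl_of_isGLB h hx
  exact ⟨fun hr => hr.unique hm, fun hr => hr ▸ hm⟩

theorem arrowS_singleton_odot (p q : A) :
    arrowS M {q} (odot M p q) = MinU A {p, M.compl q} := by
  ext r
  simp only [arrowS, Set.mem_iUnion, Set.mem_singleton_iff, exists_prop, exists_eq_left]
  constructor
  · rintro ⟨x, ⟨m, hm, hx⟩, hr⟩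
    rw [arrow_eq_singleton M (hm.1 (by simp)) hx] at hr
    exact hr ▸ hm
  · intro hr
    have hq : M.compl q ≤ r := hr.1 (by simp)
    obtain ⟨x, hx⟩ := M.exists_isGLB_of_compl_le hq
    exact ⟨x, ⟨r, hr, hx⟩, by rw [arrow_eq_singleton M hq hx]; exact Set.mem_singleton r⟩

end

theorem minU_nonempty {A : Type*} [PartialOrder A] [OrderTop A] [WellFoundedLT A] (S : Set A) :
    (MinU A S).Nonempty :=
  let ⟨m, _, hm⟩ := exists_minimal_le_of_wellFoundedLT (P := (· ∈ upperBounds S)) (a := ⊤)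
    (fun _ _ => le_top)
  ⟨m, hm⟩

/-- For all elements `p, q` of a finite orthomodular poset, `q → (p ⊙ q) = Min U(p, q')`;
in particular `p` is below every element of `q → (p ⊙ q)`, hence `p ≤₁ q → (p ⊙ q)`. -/
theorem stmt_3 {A : Type*} [PartialOrder A] [BoundedOrder A] [Finite A] (M : OMP A)
    (p q : A) :
    arrowS M {q} (odot M p q) = MinU A {p, M.compl q} ∧
    (∀ r ∈ arrowS M {q} (odot M p q), p ≤ r) ∧
    le1 {p} (arrowS M {q} (odot M p q)) := by
  rw [arrowS_singleton_odot]
  have hp : ∀ r ∈ MinU A {p, M.compl q}, p ≤ r := fun r hr => hr.1 (by simp)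
  refine ⟨rfl, hp, ?_⟩
  simp only [le1, Set.mem_singleton_iff, forall_eq]
  obtain ⟨r, hr⟩ := minU_nonempty {p, M.compl q}
  exact ⟨r, hr, hp r hr⟩
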